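/- Let q = 2^k, and let g = (1, 2, 4, …, 2^{k-1}) ∈ (ℤ/q)^k be the gadget vector. Suppose y = g·s + e ∈ (ℤ/q)^k for some s ∈ ℤ/q and e ∈ (ℤ/q)^k with every component of e having centered representative in [-q/4, q/4). Then the bit-by-bit rounding algorithm recovers s: iterating for i = k-1 down to 0, maintaining a partial value s' (initialized to 0) and setting the bit 2^{k-1-i} in s' whenever the centered representative of y_i - 2^i·s' lies outside [-q/4, q/4), terminates with s' = s. -/

import Mathlib

/-!
Invariant: after `t` rounds the partial value is `s mod 2^t`. In round `t`, subtracting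
`2^(k-1-t)·(s mod 2^t)` from `y_(k-1-t)` leaves `2^(k-1)·b + e`, where `b` is bit `t` of `s` (the
higher bits are multiplied by a multiple of `2^k`). As `2^(k-1) = q/2` and `|ê| < q/4`, the
centered representative of this residual lies in `[-q/4, q/4)` exactly when `b = 0`.
-/

/-- The centered representative `x̂ ∈ [-q/2, q/2)` of `x : ZMod q`. -/
def zCenter (q : ℕ) (x : ZMod q) : ℤ :=
  if (x.val : ℤ) < (q : ℤ) / 2 then (x.val : ℤ) else (x.val : ℤ) - q

/-- The bit-by-bit gadget inversion: after `t` iterations (processing indices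
`i = k-1, …, k-t`), `gadgetInv k y t` is the partial value `s'`; at step
`t+1` the bit `2^t` is set whenever the centered representative of
`y_{k-1-t} - 2^{k-1-t}·s'` lies outside `[-q/4, q/4)`. -/
def gadgetInv (k : ℕ) (y : ℕ → ZMod (2 ^ k)) : ℕ → ZMod (2 ^ k)
  | 0 => 0
  | t + 1 =>
    let s := gadgetInv k y t
    if -(((2 ^ k : ℕ) : ℤ) / 4) ≤ zCenter (2 ^ k) (y (k - 1 - t) - ((2 ^ (k - 1 - t) : ℕ) : ZMod (2 ^ k)) * s) ∧
        zCenter (2 ^ k) (y (k - 1 - t) - ((2 ^ (k - 1 - t) : ℕ) : ZMod (2 ^ k)) * s) < ((2 ^ k : ℕ) : ℤ) / 4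
    then s
    else s + ((2 ^ t : ℕ) : ZMod (2 ^ k))

lemma intCast_zCenter (q : ℕ) [NeZero q] (x : ZMod q) : ((zCenter q x : ℤ) : ZMod q) = x := by
  unfold zCenter
  split_ifs <;> simp

/-- A residual carrying the top bit cannot round to `0`: its centered representative would differ
from the noise's by `q/2` modulo `q`, yet both lie in `[-q/4, q/4)`. -/
lemma not_small_zCenter_half_add (q : ℕ) [NeZero q] {e : ZMod q}
    (he : |zCenter q e| < (q : ℤ) / 4) :
    ¬(-((q : ℤ) / 4) ≤ zCenter q ((q / 2 : ℕ) + e) ∧ zCenter q ((q / 2 : ℕ) + e) < (q : ℤ) / 4) := by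
  rintro ⟨hlo, hhi⟩
  set w := zCenter q ((q / 2 : ℕ) + e)
  set c := zCenter q e
  have hdvd : (q : ℤ) ∣ w - c - (q / 2 : ℕ) := by
    rw [← ZMod.intCast_zmod_eq_zero_iff_dvd]
    simp only [Int.cast_sub, Int.cast_natCast, w, c, intCast_zCenter]
    ring
  rw [abs_lt] at he
  have hneg : w - c - (q / 2 : ℕ) < 0 := by omega
  have habs : |w - c - (q / 2 : ℕ)| < q := by rw [abs_lt]; omega
  exact hneg.ne (Int.eq_zero_of_abs_lt_dvd hdvd habs)

lemma pow_mul_eq_mod_add_bit_add (j t n : ℕ) :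
    2 ^ j * n = 2 ^ j * (n % 2 ^ t) + 2 ^ (j + t) * (n / 2 ^ t % 2) + 2 ^ (j + t + 1) * (n / 2 ^ (t + 1)) := by
  conv_lhs => rw [← Nat.mod_add_div n (2 ^ (t + 1)), Nat.mod_pow_succ]
  ring

lemma natCast_pow_mul_sub_mod (k t n : ℕ) (ht : t < k) :
    ((2 ^ (k - 1 - t) : ℕ) : ZMod (2 ^ k)) * n - ((2 ^ (k - 1 - t) : ℕ) : ZMod (2 ^ k)) * ((n % 2 ^ t : ℕ))
      = ((2 ^ k / 2 * (n / 2 ^ t % 2) : ℕ) : ZMod (2 ^ k)) := by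
  obtain ⟨j, rfl⟩ : ∃ j, k = j + t + 1 := ⟨k - 1 - t, by omega⟩
  rw [show j + t + 1 - 1 - t = j by omega, show 2 ^ (j + t + 1) / 2 = 2 ^ (j + t) by
    rw [pow_succ, Nat.mul_div_cancel _ two_pos], sub_eq_iff_eq_add', ← Nat.cast_mul, ← Nat.cast_mul,
    ← Nat.cast_add, pow_mul_eq_mod_add_bit_add j t n]
  simp only [Nat.cast_add, Nat.cast_mul, ZMod.natCast_self, zero_mul, add_zero]

theorem gadgetInv_eq_natCast_val_mod (k : ℕ) (s : ZMod (2 ^ k)) (e : ℕ → ZMod (2 ^ k))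
    (he : ∀ i < k, |zCenter (2 ^ k) (e i)| < ((2 ^ k : ℕ) : ℤ) / 4) (y : ℕ → ZMod (2 ^ k))
    (hy : ∀ i < k, y i = ((2 ^ i : ℕ) : ZMod (2 ^ k)) * s + e i) :
    ∀ t ≤ k, gadgetInv k y t = ((s.val % 2 ^ t : ℕ) : ZMod (2 ^ k)) := by
  intro t
  induction t with
  | zero => simp [gadgetInv, Nat.mod_one]
  | succ t ih =>
    intro ht
    have hi : k - 1 - t < k := by omega
    have hres : y (k - 1 - t) - ((2 ^ (k - 1 - t) : ℕ) : ZMod (2 ^ k)) * gadgetInv k y t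
        = ((2 ^ k / 2 * (s.val / 2 ^ t % 2) : ℕ) : ZMod (2 ^ k)) + e (k - 1 - t) := by
      rw [ih (by omega), hy _ hi, ← natCast_pow_mul_sub_mod k t s.val (by omega), ZMod.natCast_val,
        ZMod.cast_id]
      ring
    rw [gadgetInv, hres, ih (by omega), Nat.mod_pow_succ]
    rcases Nat.mod_two_eq_zero_or_one (s.val / 2 ^ t) with hbit | hbit <;> rw [hbit]
    · simp only [mul_zero, add_zero, Nat.cast_zero, zero_add]
      have hsmall := abs_lt.mp (he _ hi)
      rw [if_pos ⟨hsmall.1.le, hsmall.2⟩]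
    · simp only [mul_one]
      rw [if_neg (not_small_zCenter_half_add _ (he _ hi))]
      push_cast
      rfl

theorem stmt_17_general (k : ℕ) (s : ZMod (2 ^ k)) (e : ℕ → ZMod (2 ^ k))
    (he : ∀ i < k, |zCenter (2 ^ k) (e i)| < ((2 ^ k : ℕ) : ℤ) / 4)
    (y : ℕ → ZMod (2 ^ k))
    (hy : ∀ i < k, y i = ((2 ^ i : ℕ) : ZMod (2 ^ k)) * s + e i) :
    gadgetInv k y k = s := by
  rw [gadgetInv_eq_natCast_val_mod k s e he y hy k le_rfl, Nat.mod_eq_of_lt (ZMod.val_lt s),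
    ZMod.natCast_zmod_val]

/-- if `y_i = 2^i·s + e_i` with each noise component having
centered representative of absolute value `< q/4`, the bit-by-bit rounding
algorithm terminates with `s` after `k` iterations. -/
theorem stmt_17 (k : ℕ) (hk : 2 ≤ k) (s : ZMod (2 ^ k)) (e : ℕ → ZMod (2 ^ k))
    (he : ∀ i < k, |zCenter (2 ^ k) (e i)| < ((2 ^ k : ℕ) : ℤ) / 4)
    (y : ℕ → ZMod (2 ^ k))
    (hy : ∀ i < k, y i = ((2 ^ i : ℕ) : ZMod (2 ^ k)) * s + e i) :
    gadgetInv k y k = s :=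
  stmt_17_general k s e he y hy
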